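/- λ_1-minimality is stable under products: if (M₁,g₁) and (M₂,g₂) are compact Riemannian manifolds with λ_1(M₁,g₁) = λ_1(M₂,g₂) = λ, and each metric can be written g_i = Σ_j df^{(i)}_j ² for finitely many first eigenfunctions f^{(i)}_j (i.e., Δf^{(i)}_j = λ f^{(i)}_j), then the product metric g₁ ⊕ g₂ on M₁ × M₂ can be written as a sum Σ dF_k² where each F_k is a first eigenfunction of the product (with eigenvalue λ). -/
import Mathlib


open Finset

/-- λ₁-minimality is stable under products.  Functions on the factors
`M₁`, `M₂` are acted on by the Laplacians `Δ₁`, `Δ₂`, and `Δ` is the Laplacian of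
the product, which satisfies `Δ(f ∘ pr_i) = (Δ_i f) ∘ pr_i`.  Tangent vectors of the
product are modelled as pairs, the differential `D` of the product satisfying
`D(f ∘ pr₁)(v₁,v₂) = D₁ f v₁` (and similarly for `pr₂`), and the product metric is
`G(v₁,v₂) = g₁ v₁ + g₂ v₂`.  If `g_i = Σ_j (d f^{(i)}_j)²` for first eigenfunctions
`f^{(i)}_j` (eigenvalue `λ` for both factors), then `G = Σ_k (d F_k)²` for a finite
family of eigenfunctions `F_k` of the product with the same eigenvalue `λ`. -/
theorem lambda1_minimal_product
    {M₁ M₂ E₁ E₂ : Type*}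
    (Δ₁ : (M₁ → ℝ) →ₗ[ℝ] (M₁ → ℝ)) (Δ₂ : (M₂ → ℝ) →ₗ[ℝ] (M₂ → ℝ))
    (Δ : (M₁ × M₂ → ℝ) →ₗ[ℝ] (M₁ × M₂ → ℝ))
    (D₁ : (M₁ → ℝ) → E₁ → ℝ) (D₂ : (M₂ → ℝ) → E₂ → ℝ)
    (D : (M₁ × M₂ → ℝ) → E₁ × E₂ → ℝ)
    (lam : ℝ)
    -- compatibility of the product Laplacian and differential with pullbacks
    (hΔ₁ : ∀ f : M₁ → ℝ, Δ (f ∘ Prod.fst) = (Δ₁ f) ∘ Prod.fst)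
    (hΔ₂ : ∀ f : M₂ → ℝ, Δ (f ∘ Prod.snd) = (Δ₂ f) ∘ Prod.snd)
    (hD₁ : ∀ (f : M₁ → ℝ) (v : E₁ × E₂), D (f ∘ Prod.fst) v = D₁ f v.1)
    (hD₂ : ∀ (f : M₂ → ℝ) (v : E₁ × E₂), D (f ∘ Prod.snd) v = D₂ f v.2)
    -- the metrics on the factors, written as sums of squares of differentials
    -- of first eigenfunctions, and the product metric
    (g₁ : E₁ → ℝ) (g₂ : E₂ → ℝ) (G : E₁ × E₂ → ℝ)
    (hG : ∀ v : E₁ × E₂, G v = g₁ v.1 + g₂ v.2)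
    (k₁ k₂ : ℕ) (f₁ : Fin k₁ → (M₁ → ℝ)) (f₂ : Fin k₂ → (M₂ → ℝ))
    (heig₁ : ∀ j, Δ₁ (f₁ j) = lam • f₁ j)
    (heig₂ : ∀ j, Δ₂ (f₂ j) = lam • f₂ j)
    (hg₁ : ∀ v : E₁, g₁ v = ∑ j : Fin k₁, (D₁ (f₁ j) v) ^ 2)
    (hg₂ : ∀ v : E₂, g₂ v = ∑ j : Fin k₂, (D₂ (f₂ j) v) ^ 2) :
    ∃ (m : ℕ) (F : Fin m → (M₁ × M₂ → ℝ)),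
      (∀ k, Δ (F k) = lam • F k) ∧
      (∀ v : E₁ × E₂, G v = ∑ k : Fin m, (D (F k) v) ^ 2) := by
  refine ⟨k₁ + k₂, Fin.append (fun j => f₁ j ∘ Prod.fst) (fun j => f₂ j ∘ Prod.snd), ?_, ?_⟩
  · intro k
    obtain ⟨j, rfl⟩ | ⟨j, rfl⟩ : (∃ j, k = Fin.castAdd k₂ j) ∨ (∃ j, k = Fin.natAdd k₁ j) := by
      cases h2 : finSumFinEquiv.symm k with
      | inl j => exact Or.inl ⟨j, by simpa using congrArg finSumFinEquiv h2⟩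
      | inr j => exact Or.inr ⟨j, by simpa using congrArg finSumFinEquiv h2⟩
    · simp only [Fin.append_left, hΔ₁, heig₁]
      rfl
    · simp only [Fin.append_right, hΔ₂, heig₂]
      rfl
  · intro v
    rw [hG, hg₁, hg₂, Fin.sum_univ_add]
    congr 1
    · exact Finset.sum_congr rfl fun j _ => by rw [Fin.append_left, hD₁]
    · exact Finset.sum_congr rfl fun j _ => by rw [Fin.append_right, hD₂]
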